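/- arXiv:1509.01696 — 4 statements merged into one kernel-verified Lean document; each statement's English description precedes it below -/
import Mathlib

section
/- The planar rate-induced tipping system has a reflection/time-reversal symmetry about the point (x_c, λ_c) = (−λ_max/2, λ_max/2): if (x, ℓ) : ℝ → ℝ² is differentiable and satisfies x'(t) = (x(t) + ℓ(t))² − 1 and ℓ'(t) = ε·ℓ(t)·(λ_max − ℓ(t)) for all t, then the pair (X, L) defined by X(t) = −λ_max − x(−t) and L(t) = λ_max − ℓ(−t) satisfies the same system: X'(t) = (X(t) + L(t))² − 1 and L'(t) = ε·L(t)·(λ_max − L(t)) for all t. (For λ_max = 3 this is the reflection about (x_c, λ_c) = (−3/2, 3/2).) -/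
/-! The map `(x, ℓ, t) ↦ (-λ_max - x, λ_max - ℓ, -t)` composes the point reflection about
`(-λ_max/2, λ_max/2)` with time reversal. Both sign changes cancel in the derivatives, so the
reflected pair solves the system whose vector field is the original one evaluated at the reflected
point; the vector field is invariant under the reflection, since `(x + ℓ)²` only sees the sign of
`x + ℓ` and the logistic term `ℓ (λ_max - ℓ)` is symmetric under `ℓ ↦ λ_max - ℓ`. -/

theorem HasDerivAt.const_sub_comp_neg {𝕜 F : Type*} [NontriviallyNormedField 𝕜]
    [NormedAddCommGroup F] [NormedSpace 𝕜 F] {f : 𝕜 → F} {f' : F} {t : 𝕜}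
    (hf : HasDerivAt f f' (-t)) (c : F) : HasDerivAt (fun s => c - f (-s)) f' t := by
  simpa using ((hf.scomp t (hasDerivAt_neg t)).const_sub c)

theorem planar_system_reflection_symmetry_general (lmax eps : ℝ)
    (x l : ℝ → ℝ)
    (hx : ∀ t, HasDerivAt x ((x t + l t) ^ 2 - 1) t)
    (hl : ∀ t, HasDerivAt l (eps * l t * (lmax - l t)) t) :
    (∀ t, HasDerivAt (fun s => -lmax - x (-s))
        (((-lmax - x (-t)) + (lmax - l (-t))) ^ 2 - 1) t) ∧
    (∀ t, HasDerivAt (fun s => lmax - l (-s))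
        (eps * (lmax - l (-t)) * (lmax - (lmax - l (-t)))) t) := by
  refine ⟨fun t => ?_, fun t => ?_⟩
  · exact ((hx (-t)).const_sub_comp_neg (-lmax)).congr_deriv (by ring)
  · exact ((hl (-t)).const_sub_comp_neg lmax).congr_deriv (by ring)

/-- Reflection/time-reversal symmetry of the planar rate-induced tipping system
about `(x_c, λ_c) = (−λ_max/2, λ_max/2)`: if `(x, ℓ)` solves `x' = (x + ℓ)² − 1`,
`ℓ' = ε·ℓ·(λ_max − ℓ)`, then `X(t) = −λ_max − x(−t)`, `L(t) = λ_max − ℓ(−t)` solves the same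
system. -/
theorem planar_system_reflection_symmetry (lmax eps : ℝ) (hlmax : 0 < lmax) (heps : 0 < eps)
    (x l : ℝ → ℝ)
    (hx : ∀ t, HasDerivAt x ((x t + l t) ^ 2 - 1) t)
    (hl : ∀ t, HasDerivAt l (eps * l t * (lmax - l t)) t) :
    (∀ t, HasDerivAt (fun s => -lmax - x (-s))
        (((-lmax - x (-t)) + (lmax - l (-t))) ^ 2 - 1) t) ∧
    (∀ t, HasDerivAt (fun s => lmax - l (-s))
        (eps * (lmax - l (-t)) * (lmax - (lmax - l (-t)))) t) :=
  planar_system_reflection_symmetry_general lmax eps x l hx hl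
end

section
/- At the critical ramp speed ε_c = 4/3 with ramp height λ_max = 3, the line x = −λ/3 − 1 is invariant for the planar rate-induced tipping system: if λ(t) = (3/2)·(tanh(2t) + 1) is the ramp with λ_max = 3 and ε = 4/3, then the function x(t) := −λ(t)/3 − 1 satisfies x'(t) = (x(t) + λ(t))² − 1 for all t ∈ ℝ. -/
/-!
The tanh ramp solves the logistic equation `λ' = ε λ (λ_max - λ)`. Along `x = -λ/3 - 1` this gives
`x' = -(ε/3) λ (3 - λ)`, while `(x + λ)² - 1 = (2λ/3 - 1)² - 1 = (4/9) λ (λ - 3)`; the two agree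
exactly when `ε = 4/3`.
-/

open Real

theorem Real.hasDerivAt_tanh (t : ℝ) : HasDerivAt tanh (1 - tanh t ^ 2) t := by
  have hcosh := (cosh_pos t).ne'
  have h := (hasDerivAt_sinh t).div (hasDerivAt_cosh t) hcosh
  rw [show sinh / cosh = tanh from funext fun s => (tanh_eq_sinh_div_cosh s).symm] at h
  refine h.congr_deriv ?_
  rw [tanh_eq_sinh_div_cosh]
  field_simp

noncomputable def tanhRamp (lamMax ε t : ℝ) : ℝ :=
  lamMax / 2 * (tanh (lamMax * ε * t / 2) + 1)

theorem hasDerivAt_tanhRamp (lamMax ε t : ℝ) :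
    HasDerivAt (tanhRamp lamMax ε)
      (ε * tanhRamp lamMax ε t * (lamMax - tanhRamp lamMax ε t)) t := by
  have hinner : HasDerivAt (fun s => lamMax * ε * s / 2) (lamMax * ε / 2) t := by
    simpa using ((hasDerivAt_id t).const_mul (lamMax * ε)).div_const 2
  have h := (((hasDerivAt_tanh _).comp t hinner).add_const 1).const_mul (lamMax / 2)
  refine h.congr_deriv ?_
  simp only [tanhRamp]
  ring

/-- At the critical ramp speed `ε_c = 4/3` with `λ_max = 3`, the line
`x = −λ/3 − 1` is invariant: with `λ(t) = (3/2)·(tanh(2t) + 1)`, the function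
`x(t) = −λ(t)/3 − 1` satisfies `x'(t) = (x(t) + λ(t))² − 1` for all `t`. -/
theorem invariant_line_critical_rate
    (lam : ℝ → ℝ) (hlam : ∀ t, lam t = 3 / 2 * (Real.tanh (2 * t) + 1))
    (x : ℝ → ℝ) (hx : ∀ t, x t = -lam t / 3 - 1) :
    ∀ t, HasDerivAt x ((x t + lam t) ^ 2 - 1) t := by
  intro t
  have hlam_ramp : lam = tanhRamp 3 (4 / 3) := by
    funext s
    rw [hlam, tanhRamp]
    ring_nf
  have hx_lam : x = fun s => -lam s / 3 - 1 := funext hx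
  have h := ((hasDerivAt_tanhRamp 3 (4 / 3) t).neg.div_const 3).sub_const 1
  rw [hx_lam, hlam_ramp]
  refine h.congr_deriv ?_
  ring
end

section
/- At ε = ε_c = 4/3 and λ_max = 3 the invariant line forms a heteroclinic connection between the two saddles: the solution (x(t), λ(t)) = (−λ(t)/3 − 1, λ(t)) of the planar rate-induced tipping system, where λ(t) = (3/2)·(tanh(2t) + 1), converges to the saddle S₋ = (−1, 0) as t → −∞ and to the saddle U₊ = (−2, 3) as t → +∞. -/
/-!
Since `tanh y = 2 σ(2y) - 1` for the logistic sigmoid `σ`, the ramp is `λ(t) = λ_max σ(λ_max ε t)`,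
so it solves the logistic equation `λ' = ε λ (λ_max - λ)` and runs from `0` to `λ_max`.
At `ε = 4/3`, `λ_max = 3` the line `x = -λ/3 - 1` is invariant, because along it
`(x + λ)² - 1 = -(4/9) λ (3 - λ) = -λ'/3`; hence `x` follows `λ` from `-1` to `-2`.
-/

open Filter Topology Real

lemma Real.tanh_eq_two_mul_sigmoid_sub_one (x : ℝ) : tanh x = 2 * sigmoid (2 * x) - 1 := by
  rw [tanh_eq_sinh_div_cosh, sinh_eq, cosh_eq, sigmoid_def, exp_neg, exp_neg,
    show 2 * x = x + x by ring, exp_add]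
  field_simp
  ring

noncomputable def ramp (ε lamMax t : ℝ) : ℝ :=
  lamMax / 2 * (tanh (lamMax * ε * t / 2) + 1)

lemma ramp_eq_mul_sigmoid (ε lamMax t : ℝ) :
    ramp ε lamMax t = lamMax * sigmoid (lamMax * ε * t) := by
  rw [ramp, tanh_eq_two_mul_sigmoid_sub_one]
  ring_nf

lemma hasDerivAt_ramp (ε lamMax t : ℝ) :
    HasDerivAt (ramp ε lamMax) (ε * ramp ε lamMax t * (lamMax - ramp ε lamMax t)) t := by
  have h := ((hasDerivAt_sigmoid _).comp t ((hasDerivAt_id t).const_mul (lamMax * ε))).const_mul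
    lamMax
  rw [ramp_eq_mul_sigmoid, funext (ramp_eq_mul_sigmoid ε lamMax)]
  exact h.congr_deriv (by simp only [id]; ring)

lemma tendsto_ramp_atBot {ε lamMax : ℝ} (h : 0 < lamMax * ε) :
    Tendsto (ramp ε lamMax) atBot (𝓝 0) := by
  rw [funext (ramp_eq_mul_sigmoid ε lamMax), ← mul_zero lamMax]
  exact (tendsto_sigmoid_atBot.comp (tendsto_id.const_mul_atBot h)).const_mul lamMax

lemma tendsto_ramp_atTop {ε lamMax : ℝ} (h : 0 < lamMax * ε) :
    Tendsto (ramp ε lamMax) atTop (𝓝 lamMax) := by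
  rw [funext (ramp_eq_mul_sigmoid ε lamMax)]
  simpa using (tendsto_sigmoid_atTop.comp (tendsto_id.const_mul_atTop h)).const_mul lamMax

lemma hasDerivAt_invariantLine {lam : ℝ → ℝ} {t : ℝ}
    (h : HasDerivAt lam (4 / 3 * lam t * (3 - lam t)) t) :
    HasDerivAt (fun s => -lam s / 3 - 1) ((-lam t / 3 - 1 + lam t) ^ 2 - 1) t :=
  ((h.neg.div_const 3).sub_const 1).congr_deriv (by ring)

lemma tendsto_invariantLine {α : Type*} {l : Filter α} {lam : α → ℝ} {c : ℝ}
    (h : Tendsto lam l (𝓝 c)) :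
    Tendsto (fun t => (-lam t / 3 - 1, lam t)) l (𝓝 (-c / 3 - 1, c)) :=
  ((h.neg.div_const 3).sub_const 1).prodMk_nhds h

/-- At `ε = ε_c = 4/3`, `λ_max = 3`, the invariant line forms a heteroclinic
connection between the two saddles: the solution `(x(t), λ(t)) = (−λ(t)/3 − 1, λ(t))` of the
planar rate-induced tipping system, with `λ(t) = (3/2)·(tanh(2t) + 1)`, converges to
`S₋ = (−1, 0)` as `t → −∞` and to `U₊ = (−2, 3)` as `t → +∞`. -/
theorem heteroclinic_connection_critical_rate
    (lam : ℝ → ℝ) (hlam : ∀ t, lam t = 3 / 2 * (Real.tanh (2 * t) + 1))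
    (x : ℝ → ℝ) (hx : ∀ t, x t = -lam t / 3 - 1) :
    (∀ t, HasDerivAt x ((x t + lam t) ^ 2 - 1) t) ∧
    (∀ t, HasDerivAt lam (4 / 3 * lam t * (3 - lam t)) t) ∧
    Tendsto (fun t => (x t, lam t)) atBot (nhds ((-1 : ℝ), (0 : ℝ))) ∧
    Tendsto (fun t => (x t, lam t)) atTop (nhds ((-2 : ℝ), (3 : ℝ))) := by
  have hlam_ramp : lam = ramp (4 / 3) 3 := funext fun t => by
    rw [hlam, ramp]; ring_nf
  have hrate : (0 : ℝ) < 3 * (4 / 3) := by norm_num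
  have hlam_deriv : ∀ t, HasDerivAt lam (4 / 3 * lam t * (3 - lam t)) t := by
    rw [hlam_ramp]; exact hasDerivAt_ramp (4 / 3) 3
  obtain rfl : x = fun t => -lam t / 3 - 1 := funext hx
  refine ⟨fun t => hasDerivAt_invariantLine (hlam_deriv t), hlam_deriv, ?_, ?_⟩
  · convert tendsto_invariantLine (hlam_ramp ▸ tendsto_ramp_atBot hrate) using 3
    norm_num
  · convert tendsto_invariantLine (hlam_ramp ▸ tendsto_ramp_atTop hrate) using 3
    norm_num
end

section
/- For the autonomous scalar ODE with frozen parameter, all initial conditions below the unstable equilibrium converge to the stable equilibrium: fix λ ∈ ℝ and let x : [0, ∞) → ℝ be differentiable with x'(t) = (x(t) + λ)² − 1 for all t ≥ 0 and x(0) < −λ + 1; then x(t) → −λ − 1 as t → ∞. -/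
/-!
Shifting by `λ` reduces the claim to `y' = y² - 1` with `y 0 < 1`, whose solution is explicit:
`q t = (1 - y 0) (1 + y t) - (1 + y 0) e^{-2t} (1 - y t)` satisfies the linear equation
`q' = (y - 1) q` with `q 0 = 0`, so `q ≡ 0` by Grönwall. Solving `q t = 0` for `1 + y t` gives
`1 + y t = 2 (1 + y 0) e^{-2t} / ((1 - y 0) + (1 + y 0) e^{-2t})`, which tends to `0` because
`1 - y 0 ≠ 0`.
-/

open Filter Real Set Topology

theorem eq_zero_of_hasDerivAt_smul_self {E : Type*} [NormedAddCommGroup E] [NormedSpace ℝ E]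
    {f : ℝ → E} {g : ℝ → ℝ} {a : ℝ} (hg : ContinuousOn g (Ici a))
    (hf : ∀ t, a ≤ t → HasDerivAt f (g t • f t) t) (ha : f a = 0) :
    ∀ t, a ≤ t → f t = 0 := by
  intro b hab
  obtain ⟨K, hK⟩ := isCompact_Icc.exists_bound_of_continuousOn (hg.mono Icc_subset_Ici_self)
  refine eq_zero_of_abs_deriv_le_mul_abs_self_of_eq_zero_right (K := K)
    (fun t ht => (hf t ht.1).continuousAt.continuousWithinAt)
    (fun t ht => (hf t ht.1).hasDerivWithinAt) ha (fun t ht => ?_) b ⟨hab, le_rfl⟩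
  rw [norm_smul]
  exact mul_le_mul_of_nonneg_right (hK t (Ico_subset_Icc_self ht)) (norm_nonneg _)

section Riccati

variable {y : ℝ → ℝ}

theorem hasDerivAt_riccati_first_integral {t : ℝ} (y₀ : ℝ) (hy : HasDerivAt y (y t ^ 2 - 1) t) :
    HasDerivAt (fun s => (1 - y₀) * (1 + y s) - (1 + y₀) * exp (-2 * s) * (1 - y s))
      ((y t - 1) * ((1 - y₀) * (1 + y t) - (1 + y₀) * exp (-2 * t) * (1 - y t))) t := by
  have hexp : HasDerivAt (fun s => exp (-2 * s)) (exp (-2 * t) * (-2 * 1)) t :=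
    ((hasDerivAt_id' t).const_mul (-2)).exp
  refine (((hy.const_add 1).const_mul (1 - y₀)).sub
    ((hexp.const_mul (1 + y₀)).mul (hy.const_sub 1))).congr_deriv ?_
  ring

theorem riccati_first_integral_eq_zero (hy : ∀ t, 0 ≤ t → HasDerivAt y (y t ^ 2 - 1) t) :
    ∀ t, 0 ≤ t → (1 - y 0) * (1 + y t) - (1 + y 0) * exp (-2 * t) * (1 - y t) = 0 := by
  refine eq_zero_of_hasDerivAt_smul_self (g := fun t => y t - 1)
    (fun t ht => ((hy t ht).continuousAt.sub continuousAt_const).continuousWithinAt)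
    (fun t ht => hasDerivAt_riccati_first_integral (y 0) (hy t ht)) ?_
  simp only [mul_zero, exp_zero, mul_one]
  ring

theorem tendsto_neg_one_of_hasDerivAt_sq_sub_one
    (hy : ∀ t, 0 ≤ t → HasDerivAt y (y t ^ 2 - 1) t) (hy0 : y 0 < 1) :
    Tendsto y atTop (𝓝 (-1)) := by
  have hdecay : Tendsto (fun t : ℝ => exp (-2 * t)) atTop (𝓝 0) :=
    tendsto_exp_atBot.comp (tendsto_id.const_mul_atTop_of_neg (by norm_num))
  have hden : Tendsto (fun t => (1 - y 0) + (1 + y 0) * exp (-2 * t)) atTop (𝓝 (1 - y 0)) := by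
    simpa using (hdecay.const_mul (1 + y 0)).const_add (1 - y 0)
  have hshift : Tendsto (fun t => 1 + y t) atTop (𝓝 0) := by
    have hsol : Tendsto (fun t => 2 * (1 + y 0) * exp (-2 * t) /
        ((1 - y 0) + (1 + y 0) * exp (-2 * t))) atTop (𝓝 0) := by
      have := (hdecay.const_mul (2 * (1 + y 0))).div hden (by linarith)
      rwa [mul_zero, zero_div] at this
    refine hsol.congr' ?_
    filter_upwards [eventually_ge_atTop 0, hden.eventually_ne (by linarith : 1 - y 0 ≠ 0)]
      with t ht hne
    rw [div_eq_iff hne]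
    linear_combination (riccati_first_integral_eq_zero hy t ht).symm
  simpa using hshift.sub_const 1

end Riccati

/-- For the frozen-parameter scalar ODE `x' = (x + λ)² − 1`, all initial
conditions below the unstable equilibrium converge to the stable equilibrium: if
`x : [0, ∞) → ℝ` is differentiable with `x'(t) = (x(t) + λ)² − 1` for all `t ≥ 0` and
`x(0) < −λ + 1`, then `x(t) → −λ − 1` as `t → ∞`. -/
theorem frozen_ode_convergence_to_stable_equilibrium (l : ℝ) (x : ℝ → ℝ)
    (hx : ∀ t, 0 ≤ t → HasDerivAt x ((x t + l) ^ 2 - 1) t)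
    (hx0 : x 0 < -l + 1) :
    Tendsto x atTop (nhds (-l - 1)) := by
  have hy := tendsto_neg_one_of_hasDerivAt_sq_sub_one (y := fun t => x t + l)
    (fun t ht => (hx t ht).add_const l) (by linarith)
  simpa [sub_eq_add_neg, add_comm] using hy.sub_const l
end
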